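/- arXiv:2405.03453 — 10 statements merged into one kernel-verified Lean document; each statement's English description precedes it below -/
import Mathlib

section
/- Let σ, σ′, η, Ê, v be positive reals and ρ ∈ [−1,1] with |ρ| > vÊ/(σ′η). For θ ∈ ℝ define Δ(θ) = √(σ² − 2θρσ′σ + θ²σ′²) and g(θ) = (Δ(θ)η + |θ|Êv)/v. Set Δ̃ = σ√(1−ρ²)/√(1 − v²Ê²/(σ′²η²)) and θ̃ = ρσ/σ′ − sgn(ρ)·Δ̃vÊ/(σ′²η). Then g attains its global minimum over ℝ at θ̃, the sign of θ̃ equals the sign of ρ, Δ(θ̃) = Δ̃, and the minimum value is g(θ̃) = (Δ̃η + |θ̃|Êv)/v. -/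
theorem wmlmc_cs_aux (x y c : ℝ) :
    y * x + c ^ 2 ≤ Real.sqrt (x ^ 2 + c ^ 2) * Real.sqrt (y ^ 2 + c ^ 2) := by
  have h1 : Real.sqrt (x ^ 2 + c ^ 2) * Real.sqrt (y ^ 2 + c ^ 2)
      = Real.sqrt ((x ^ 2 + c ^ 2) * (y ^ 2 + c ^ 2)) :=
    (Real.sqrt_mul (by positivity) _).symm
  have h2 : (y * x + c ^ 2) ^ 2 ≤ (x ^ 2 + c ^ 2) * (y ^ 2 + c ^ 2) := by
    nlinarith [sq_nonneg (c * (x - y))]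
  calc y * x + c ^ 2 ≤ |y * x + c ^ 2| := le_abs_self _
    _ = Real.sqrt ((y * x + c ^ 2) ^ 2) := (Real.sqrt_sq_eq_abs _).symm
    _ ≤ _ := by rw [h1]; exact Real.sqrt_le_sqrt h2

set_option maxHeartbeats 800000 in
/-- optimal weight in the weighted MLMC level recursion, case
`|ρ| > vÊ/(σ'η)`: the cost function `g` attains its global minimum at `θ̃`,
the sign of `θ̃` equals the sign of `ρ`, `Δ(θ̃) = Δ̃`, and the minimal value
is `(Δ̃η + |θ̃|Êv)/v`. -/
theorem wmlmc_optimal_weight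
    (σ σ' η E v ρ : ℝ)
    (hσ : 0 < σ) (hσ' : 0 < σ') (hη : 0 < η) (hE : 0 < E) (hv : 0 < v)
    (hρ : ρ ∈ Set.Icc (-1 : ℝ) 1)
    (hcond : v * E / (σ' * η) < |ρ|)
    (Δ g : ℝ → ℝ)
    (hΔ : ∀ θ, Δ θ = Real.sqrt (σ ^ 2 - 2 * θ * ρ * σ' * σ + θ ^ 2 * σ' ^ 2))
    (hg : ∀ θ, g θ = (Δ θ * η + |θ| * E * v) / v)
    (Δt θt : ℝ)
    (hΔt : Δt = σ * Real.sqrt (1 - ρ ^ 2) /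
      Real.sqrt (1 - v ^ 2 * E ^ 2 / (σ' ^ 2 * η ^ 2)))
    (hθt : θt = ρ * σ / σ' - Real.sign ρ * (Δt * v * E / (σ' ^ 2 * η))) :
    (∀ θ : ℝ, g θt ≤ g θ) ∧
    Real.sign θt = Real.sign ρ ∧
    Δ θt = Δt ∧
    g θt = (Δt * η + |θt| * E * v) / v := by
  obtain ⟨hρ1, hρ2⟩ := hρ
  obtain ⟨s, hs⟩ : ∃ s : ℝ, s = Real.sign ρ := ⟨_, rfl⟩
  rw [← hs] at hθt
  obtain ⟨a, ha⟩ : ∃ a : ℝ, a = v * E / (σ' * η) := ⟨_, rfl⟩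
  rw [← ha] at hcond
  have ha0 : 0 < a := by rw [ha]; positivity
  have haρ : a < |ρ| := hcond
  have hρne : ρ ≠ 0 := by
    intro h
    rw [h, abs_zero] at haρ; linarith
  have habs1 : |ρ| ≤ 1 := abs_le.mpr ⟨hρ1, hρ2⟩
  have ha1 : a < 1 := lt_of_lt_of_le haρ habs1
  have hρsq : ρ ^ 2 ≤ 1 := by nlinarith [sq_abs ρ, abs_nonneg ρ]
  have hscases : (0 < ρ ∧ s = 1) ∨ (ρ < 0 ∧ s = -1) := by
    rcases lt_trichotomy ρ 0 with h | h | h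
    · exact Or.inr ⟨h, hs ▸ Real.sign_of_neg h⟩
    · exact absurd h hρne
    · exact Or.inl ⟨h, hs ▸ Real.sign_of_pos h⟩
  have hs2 : s ^ 2 = 1 := by rcases hscases with ⟨_, h⟩ | ⟨_, h⟩ <;> rw [h] <;> norm_num
  have hsρ : s * ρ = |ρ| := by
    rcases hscases with ⟨h, h'⟩ | ⟨h, h'⟩
    · rw [h', abs_of_pos h]; ring
    · rw [h', abs_of_neg h]; ring
  have hEv : a * σ' * η = v * E := by
    rw [ha]; field_simp
  obtain ⟨c, hc⟩ : ∃ c : ℝ, c = σ * Real.sqrt (1 - ρ ^ 2) := ⟨_, rfl⟩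
  have hc0 : 0 ≤ c := by rw [hc]; positivity
  have hc2 : c ^ 2 = σ ^ 2 * (1 - ρ ^ 2) := by
    rw [hc, mul_pow, Real.sq_sqrt (by linarith)]
  obtain ⟨r, hr⟩ : ∃ r : ℝ, r = Real.sqrt (1 - a ^ 2) := ⟨_, rfl⟩
  have hr0 : 0 < r := hr ▸ Real.sqrt_pos.mpr (by nlinarith)
  have hr2 : r ^ 2 = 1 - a ^ 2 := hr ▸ Real.sq_sqrt (by nlinarith)
  have hΔt' : Δt = c / r := by
    rw [hΔt, hc, hr]
    congr 2
    rw [ha]; field_simp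
  have hΔt0 : 0 ≤ Δt := by rw [hΔt']; positivity
  have hΔtr : Δt * r = c := by rw [hΔt', div_mul_cancel₀ _ (ne_of_gt hr0)]
  have hΔt2 : Δt ^ 2 * (1 - a ^ 2) = c ^ 2 := by
    rw [← hr2]; linear_combination (Δt * r + c) * hΔtr
  have hθt' : θt * σ' = ρ * σ - s * (Δt * a) := by
    rw [hθt, ha]; field_simp
  -- sign of θt
  have hΔta : Δt * a < |ρ| * σ := by
    have h1 : a ^ 2 < ρ ^ 2 := by nlinarith [abs_nonneg ρ, sq_abs ρ]
    have hca : c * a < |ρ| * σ * r := by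
      have hsq : (c * a) ^ 2 < (|ρ| * σ * r) ^ 2 := by
        have e2 : (|ρ| * σ * r) ^ 2 = ρ ^ 2 * σ ^ 2 * (1 - a ^ 2) := by
          rw [mul_pow, mul_pow, sq_abs, hr2]
        rw [e2]
        nlinarith [hc2, mul_pos (pow_pos hσ 2) (sub_pos.mpr h1)]
      exact lt_of_pow_lt_pow_left₀ 2 (by positivity) hsq
    have h2 : Δt * a * r < |ρ| * σ * r := by
      calc Δt * a * r = c * a := by rw [← hΔtr]; ring
        _ < _ := hca
    exact lt_of_mul_lt_mul_right h2 hr0.le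
  have h3 : s * θt * σ' = |ρ| * σ - Δt * a := by
    linear_combination s * hθt' + σ * hsρ - Δt * a * hs2
  have hst : 0 < s * θt := by
    have h4 : 0 < s * θt * σ' := by rw [h3]; linarith
    have h5 : s * θt = s * θt * σ' / σ' := by field_simp
    rw [h5]; exact div_pos h4 hσ'
  have hsignθ : Real.sign θt = Real.sign ρ := by
    rw [← hs]
    rcases hscases with ⟨h, h'⟩ | ⟨h, h'⟩
    · rw [h'] at hst ⊢
      exact Real.sign_of_pos (by linarith)
    · rw [h'] at hst ⊢
      exact Real.sign_of_neg (by linarith)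
  have habsθt : |θt| = s * θt := by
    have h1 : |s * θt| = s * θt := abs_of_pos hst
    have h2 : |s| = 1 := by rcases hscases with ⟨_, h⟩ | ⟨_, h⟩ <;> rw [h] <;> norm_num
    calc |θt| = |s| * |θt| := by rw [h2, one_mul]
      _ = |s * θt| := (abs_mul s θt).symm
      _ = s * θt := h1
  have hΔθt : Δ θt = Δt := by
    rw [hΔ]
    have harg : σ ^ 2 - 2 * θt * ρ * σ' * σ + θt ^ 2 * σ' ^ 2 = Δt ^ 2 := by
      have e1 : θt * σ' - ρ * σ = -(s * (Δt * a)) := by linarith [hθt']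
      have e0 : σ ^ 2 - 2 * θt * ρ * σ' * σ + θt ^ 2 * σ' ^ 2
          = (θt * σ' - ρ * σ) ^ 2 + σ ^ 2 * (1 - ρ ^ 2) := by ring
      rw [e0, e1]
      linear_combination Δt ^ 2 * a ^ 2 * hs2 - hΔt2 - hc2
    rw [harg, Real.sqrt_sq hΔt0]
  -- main minimality
  have hmin : ∀ θ : ℝ, g θt ≤ g θ := by
    intro θ
    rw [hg, hg, hΔθt]
    apply (div_le_div_iff_of_pos_right hv).mpr
    -- abbreviate X = θσ' - ρσ, X0 = -(s Δt a)
    have hΔθ : Δ θ = Real.sqrt ((θ * σ' - ρ * σ) ^ 2 + c ^ 2) := by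
      rw [hΔ]
      congr 1
      linear_combination -hc2
    rcases hΔt0.eq_or_lt with hz | hpos
    · -- degenerate case Δt = 0, ρ² = 1
      have hczero : c = 0 := by rw [← hΔtr, ← hz]; ring
      have hρ2eq : ρ ^ 2 = 1 := by
        have h9 : σ ^ 2 * (1 - ρ ^ 2) = 0 := by rw [← hc2, hczero]; ring
        have h10 : (1 : ℝ) - ρ ^ 2 = 0 :=
          (mul_eq_zero.mp h9).resolve_left (by positivity)
        linarith
      have hΔabs : Δ θ = |θ * σ' - ρ * σ| := by
        rw [hΔθ, hczero]
        rw [show (θ * σ' - ρ * σ) ^ 2 + 0 ^ 2 = (θ * σ' - ρ * σ) ^ 2 by ring]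
        exact Real.sqrt_sq_eq_abs _
      have hθtv : θt * σ' = ρ * σ := by
        rw [hθt']; rw [← hz]; ring
      have tri : |θt| - |θ| ≤ |θt - θ| := abs_sub_abs_le_abs_sub _ _
      have htri2 : |θt - θ| * σ' = |θ * σ' - ρ * σ| := by
        have e : |θ * σ' - ρ * σ| = |(θt - θ) * σ'| := by
          rw [show θ * σ' - ρ * σ = -((θt - θ) * σ') by linear_combination hθtv,
            abs_neg]
        rw [e, abs_mul, abs_of_pos hσ']
      rw [hΔabs, ← hz]
      have b0 : |θt| ≤ |θ| + |θt - θ| := by linarith [tri]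
      have b1 : |θt| * (E * v) ≤ (|θ| + |θt - θ|) * (E * v) :=
        mul_le_mul_of_nonneg_right b0 (mul_pos hE hv).le
      have b2 : |θt - θ| * (E * v) ≤ |θ * σ' - ρ * σ| * η := by
        calc |θt - θ| * (E * v) = |θt - θ| * σ' * (a * η) := by
              linear_combination (-|θt - θ|) * hEv
          _ = |θ * σ' - ρ * σ| * (a * η) := by rw [htri2]
          _ ≤ |θ * σ' - ρ * σ| * (1 * η) :=
              mul_le_mul_of_nonneg_left
                (mul_le_mul_of_nonneg_right ha1.le hη.le) (abs_nonneg _)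
          _ = |θ * σ' - ρ * σ| * η := by ring
      linarith [b1, b2]
    · -- main case Δt > 0
      have hX0sq : (-(s * (Δt * a))) ^ 2 + c ^ 2 = Δt ^ 2 := by
        linear_combination Δt ^ 2 * a ^ 2 * hs2 - hΔt2
      have hΔtval : Δt = Real.sqrt ((-(s * (Δt * a))) ^ 2 + c ^ 2) := by
        rw [hX0sq, Real.sqrt_sq hΔt0]
      have key : (-(s * (Δt * a))) * (θ * σ' - ρ * σ) + c ^ 2 ≤ Δ θ * Δt := by
        rw [hΔθ]
        nth_rewrite 2 [hΔtval]
        exact wmlmc_cs_aux (θ * σ' - ρ * σ) (-(s * (Δt * a))) c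
      have hsθ : s * θ ≤ |θ| := by
        calc s * θ ≤ |s * θ| := le_abs_self _
          _ = |s| * |θ| := abs_mul _ _
          _ = |θ| := by
              rcases hscases with ⟨_, h⟩ | ⟨_, h⟩ <;> rw [h] <;> simp
      -- multiply goal through by Δt > 0
      rw [← mul_le_mul_iff_of_pos_right hpos]
      have step1 : η * ((-(s * (Δt * a))) * (θ * σ' - ρ * σ) + c ^ 2)
          + E * v * Δt * (s * θ) ≤ (Δ θ * η + |θ| * E * v) * Δt := by
        have k1 := mul_le_mul_of_nonneg_left key hη.le
        have k2 : E * v * Δt * (s * θ) ≤ E * v * Δt * |θ| :=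
          mul_le_mul_of_nonneg_left hsθ (by positivity)
        linarith [k1, k2]
      have step2 : (Δt * η + |θt| * E * v) * Δt
          = η * ((-(s * (Δt * a))) * (θ * σ' - ρ * σ) + c ^ 2)
            + E * v * Δt * (s * θ) := by
        rw [habsθt]
        linear_combination (s * θ * Δt - s * θt * Δt) * hEv
          + (a * η * s * Δt) * hθt' + (-(a ^ 2 * η * Δt ^ 2)) * hs2 + η * hΔt2
      rw [step2]
      exact step1
  exact ⟨hmin, hsignθ, hΔθt, by rw [hg, hΔθt]⟩
end

section
/- Let σ, σ′, η, Ê, v be positive reals and ρ ∈ [−1,1] with |ρ| ≤ vÊ/(σ′η). For θ ∈ ℝ define Δ(θ) = √(σ² − 2θρσ′σ + θ²σ′²) and g(θ) = (Δ(θ)η + |θ|Êv)/v. Then g(θ) ≥ g(0) = ση/v for every θ ∈ ℝ; that is, the minimum of g over ℝ is attained at θ = 0. -/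
/-! Writing `x = θσ'`, the variance `Δ(θ)² = (σ - ρx)² + (1 - ρ²)x²` is at least `(σ - ρx)²`, so
`Δ(θ) ≥ σ - |ρ||θ|σ'`. The hypothesis on `|ρ|` says exactly that the penalty `|θ|Êv` pays back
this possible loss `|ρ||θ|σ'η` in the first term of `g`. -/

theorem sub_abs_mul_le_sqrt {ρ : ℝ} (hρ : |ρ| ≤ 1) (a x : ℝ) :
    a - |ρ * x| ≤ √(a ^ 2 - 2 * ρ * x * a + x ^ 2) := by
  have hρ_sq : ρ ^ 2 ≤ 1 := by nlinarith [abs_nonneg ρ, sq_abs ρ]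
  have h_sq : (a - ρ * x) ^ 2 ≤ a ^ 2 - 2 * ρ * x * a + x ^ 2 := by
    nlinarith [mul_nonneg (sq_nonneg x) (sub_nonneg.mpr hρ_sq)]
  calc a - |ρ * x| ≤ a - ρ * x := by linarith [le_abs_self (ρ * x)]
    _ ≤ |a - ρ * x| := le_abs_self _
    _ = √((a - ρ * x) ^ 2) := (Real.sqrt_sq_eq_abs _).symm
    _ ≤ √(a ^ 2 - 2 * ρ * x * a + x ^ 2) := Real.sqrt_le_sqrt h_sq

theorem wmlmc_zero_weight_optimal_general
    (σ σ' η E v ρ : ℝ)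
    (hσ : 0 < σ) (hσ' : 0 < σ') (hη : 0 < η) (hv : 0 < v)
    (hρ : ρ ∈ Set.Icc (-1 : ℝ) 1)
    (hcond : |ρ| ≤ v * E / (σ' * η))
    (Δ g : ℝ → ℝ)
    (hΔ : ∀ θ, Δ θ = Real.sqrt (σ ^ 2 - 2 * θ * ρ * σ' * σ + θ ^ 2 * σ' ^ 2))
    (hg : ∀ θ, g θ = (Δ θ * η + |θ| * E * v) / v) :
    (∀ θ : ℝ, g 0 ≤ g θ) ∧ g 0 = σ * η / v := by
  have hg0 : g 0 = σ * η / v := by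
    simp [hg, hΔ, Real.sqrt_sq hσ.le]
  refine ⟨fun θ => ?_, hg0⟩
  have hΔ_ge : σ - |ρ| * (|θ| * σ') ≤ Δ θ := by
    have h := sub_abs_mul_le_sqrt (abs_le.mpr hρ) σ (θ * σ')
    rw [abs_mul, abs_mul, abs_of_pos hσ'] at h
    rw [hΔ]
    convert h using 2
    ring
  have hpenalty : |ρ| * σ' * η ≤ v * E := by
    rwa [le_div_iff₀ (mul_pos hσ' hη), ← mul_assoc] at hcond
  rw [hg0, hg]
  gcongr
  nlinarith [mul_le_mul_of_nonneg_left hpenalty (abs_nonneg θ)]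

/-- in the weighted MLMC level recursion, when
`|ρ| ≤ vÊ/(σ'η)` the cost function `g` is minimised over ℝ at `θ = 0`,
with minimal value `ση/v`. -/
theorem wmlmc_zero_weight_optimal
    (σ σ' η E v ρ : ℝ)
    (hσ : 0 < σ) (hσ' : 0 < σ') (hη : 0 < η) (hE : 0 < E) (hv : 0 < v)
    (hρ : ρ ∈ Set.Icc (-1 : ℝ) 1)
    (hcond : |ρ| ≤ v * E / (σ' * η))
    (Δ g : ℝ → ℝ)
    (hΔ : ∀ θ, Δ θ = Real.sqrt (σ ^ 2 - 2 * θ * ρ * σ' * σ + θ ^ 2 * σ' ^ 2))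
    (hg : ∀ θ, g θ = (Δ θ * η + |θ| * E * v) / v) :
    (∀ θ : ℝ, g 0 ≤ g θ) ∧ g 0 = σ * η / v :=
  wmlmc_zero_weight_optimal_general σ σ' η E v ρ hσ hσ' hη hv hρ hcond Δ g hΔ hg
end

section
/- Let σ, σ′, η, Ê, v be positive reals and ρ ∈ [−1,1], and set q = vÊ/(σ′η). Assume q < |ρ|. Define Δ̃ = σ√(1−ρ²)/√(1 − q²) and θ̃ = ρσ/σ′ − sgn(ρ)·Δ̃vÊ/(σ′²η). Then (Δ̃η + |θ̃|Êv)/(ση) = |ρ|q + √(1−ρ²)·√(1−q²). Consequently, if Ê = δ′σ′η′/v for some δ′ > 0 and η′ > 0, and μ = η′/η, then the normalized cost δ̃ := (Δ̃η + |θ̃|Êv)/(ση) satisfies δ̃ = μ|ρ|δ′ + √(1−ρ²)·√(1−μ²δ′²). -/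
set_option maxHeartbeats 1000000


/-- the optimised cost of the weighted MLMC level recursion,
normalised by the single-level cost `ση`, equals `|ρ|q + √(1−ρ²)√(1−q²)`
with `q = vÊ/(σ'η)`; consequently, writing `Ê = δ'σ'η'/v` and `μ = η'/η`,
the normalised cost is `μ|ρ|δ' + √(1−ρ²)√(1−μ²δ'²)`. -/
theorem wmlmc_normalised_cost
    (σ σ' η E v ρ q : ℝ)
    (hσ : 0 < σ) (hσ' : 0 < σ') (hη : 0 < η) (hE : 0 < E) (hv : 0 < v)
    (hρ : ρ ∈ Set.Icc (-1 : ℝ) 1)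
    (hq : q = v * E / (σ' * η))
    (hcond : q < |ρ|)
    (Δt θt : ℝ)
    (hΔt : Δt = σ * Real.sqrt (1 - ρ ^ 2) / Real.sqrt (1 - q ^ 2))
    (hθt : θt = ρ * σ / σ' - Real.sign ρ * (Δt * v * E / (σ' ^ 2 * η)))
    (δ' η' μ : ℝ) (hδ' : 0 < δ') (hη' : 0 < η')
    (hE' : E = δ' * σ' * η' / v) (hμ : μ = η' / η) :
    (Δt * η + |θt| * E * v) / (σ * η)
      = |ρ| * q + Real.sqrt (1 - ρ ^ 2) * Real.sqrt (1 - q ^ 2) ∧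
    (Δt * η + |θt| * E * v) / (σ * η)
      = μ * |ρ| * δ' + Real.sqrt (1 - ρ ^ 2) * Real.sqrt (1 - μ ^ 2 * δ' ^ 2) := by
  obtain ⟨hρ1, hρ2⟩ := hρ
  have hq0 : 0 < q := by rw [hq]; positivity
  have hρ0 : ρ ≠ 0 := by
    intro h
    rw [h, abs_zero] at hcond; linarith
  have hρabs : |ρ| ≤ 1 := abs_le.mpr ⟨hρ1, hρ2⟩
  have hq1 : q < 1 := lt_of_lt_of_le hcond hρabs
  have hq2 : q ^ 2 < ρ ^ 2 := by
    have h1 : q ^ 2 < |ρ| ^ 2 := by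
      have := abs_nonneg ρ
      nlinarith
    rwa [sq_abs] at h1
  have hρsq : ρ ^ 2 ≤ 1 := by
    have := sq_abs ρ
    nlinarith
  set s := Real.sqrt (1 - ρ ^ 2) with hsdef
  set t := Real.sqrt (1 - q ^ 2) with htdef
  have hs2 : s ^ 2 = 1 - ρ ^ 2 := Real.sq_sqrt (by nlinarith)
  have ht2 : t ^ 2 = 1 - q ^ 2 := Real.sq_sqrt (by nlinarith)
  have hs0 : 0 ≤ s := Real.sqrt_nonneg _
  have ht0 : 0 < t := Real.sqrt_pos.mpr (by nlinarith)
  have hΔt' : Δt = σ * s / t := hΔt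
  have hvE : v * E = q * (σ' * η) := by
    rw [hq]; field_simp
  have hsign : |Real.sign ρ| = 1 := by
    rcases lt_or_gt_of_ne hρ0 with h | h
    · rw [Real.sign_of_neg h]; norm_num
    · rw [Real.sign_of_pos h]; norm_num
  have hρeq : ρ = Real.sign ρ * |ρ| := by
    rcases lt_or_gt_of_ne hρ0 with h | h
    · rw [Real.sign_of_neg h, abs_of_neg h]; ring
    · rw [Real.sign_of_pos h, abs_of_pos h]; ring
  have hA : θt = Real.sign ρ * (|ρ| * σ / σ' - Δt * q / σ') := by
    rw [hθt]
    have h1 : Δt * v * E / (σ' ^ 2 * η) = Δt * q / σ' := by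
      have h2 : Δt * v * E = Δt * (v * E) := by ring
      rw [h2, hvE]
      field_simp
    rw [h1]
    nth_rewrite 1 [hρeq]
    ring
  have hsq : s * q ≤ |ρ| * t := by
    have h2 : (s * q) ^ 2 ≤ (|ρ| * t) ^ 2 := by
      rw [mul_pow, mul_pow, hs2, ht2, sq_abs]
      nlinarith
    have h3 : 0 ≤ |ρ| * t := mul_nonneg (abs_nonneg ρ) ht0.le
    exact le_of_pow_le_pow_left₀ (by norm_num : (2:ℕ) ≠ 0) h3 h2
  have h4 : Δt * q ≤ |ρ| * σ := by
    rw [hΔt', div_mul_eq_mul_div, div_le_iff₀ ht0]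
    nlinarith
  have hAnn : 0 ≤ |ρ| * σ / σ' - Δt * q / σ' := by
    rw [div_sub_div_same]
    exact div_nonneg (by linarith) hσ'.le
  have habsθ : |θt| = |ρ| * σ / σ' - Δt * q / σ' := by
    rw [hA, abs_mul, hsign, one_mul, abs_of_nonneg hAnn]
  have hnum : Δt * η + |θt| * E * v = σ * η * (|ρ| * q + s * t) := by
    rw [habsθ, hΔt']
    have hEv : E * v = q * (σ' * η) := by rw [mul_comm]; exact hvE
    have hEv' : E = q * (σ' * η) / v := by field_simp at hEv ⊢; linarith [hEv]
    rw [hEv']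
    field_simp
    linear_combination (-s) * ht2
  have key : (Δt * η + |θt| * E * v) / (σ * η) = |ρ| * q + s * t := by
    rw [hnum, mul_div_assoc]
    field_simp
  have hqμ : q = μ * δ' := by
    rw [hq, hE', hμ]; field_simp
  refine ⟨key, ?_⟩
  have hmm : 1 - μ ^ 2 * δ' ^ 2 = 1 - q ^ 2 := by rw [hqμ]; ring
  have hst : Real.sqrt (1 - μ ^ 2 * δ' ^ 2) = t := by rw [htdef, hmm]
  rw [key, hst, hqμ]
  ring
end

section
/- Let L ≥ 1 be an integer, let η₀,…,η_L be positive reals, ρ₁,…,ρ_L ∈ [−1,1], and set μ_l = η_{l−1}/η_l for l = 1,…,L. Define δ₀ = 1 and, for l = 1,…,L, δ_l = μ_l|ρ_l|δ_{l−1} + √(1−ρ_l²)·√(1−μ_l²δ_{l−1}²), and assume |ρ_l| > μ_lδ_{l−1} for every l = 1,…,L. Then η_L·δ_L ≤ η₀ + Σ_{l=1}^{L} η_l√(1−ρ_l²). Consequently, for any σ_L > 0 and v > 0, the square-root cost Ẽ_L := σ_Lη_Lδ_L/v of the optimally weighted multilevel estimator satisfies Ẽ_L ≤ (σ_L/v)·(η₀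 + Σ_{l=1}^{L} η_l√(1−ρ_l²)). -/
/-!
Since `√(1 - μ_l² δ_{l-1}²) ≤ 1`, `|ρ_l| ≤ 1` and `η_l μ_l = η_{l-1}`, each step of the recursion gives
`η_l δ_l ≤ η_{l-1} δ_{l-1} + η_l √(1 - ρ_l²)`; summing these from `η₀ δ₀ = η₀` gives the bound.
-/

open Finset

lemma mul_cost_step_le {ηc ηf μ ρ d : ℝ} (hηf : 0 ≤ ηf) (hμ : ηf * μ = ηc) (hρ : |ρ| ≤ 1)
    (hd : 0 ≤ ηc * d) :
    ηf * (μ * |ρ| * d + √(1 - ρ ^ 2) * √(1 - μ ^ 2 * d ^ 2)) ≤ ηc * d + ηf * √(1 - ρ ^ 2) := by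
  have hcoarse : ηf * (μ * |ρ| * d) ≤ ηc * d := by
    calc ηf * (μ * |ρ| * d) = |ρ| * (ηc * d) := by rw [← hμ]; ring
      _ ≤ ηc * d := mul_le_of_le_one_left hd hρ
  have hfine : ηf * (√(1 - ρ ^ 2) * √(1 - μ ^ 2 * d ^ 2)) ≤ ηf * √(1 - ρ ^ 2) := by
    have hsqrt_le_one : √(1 - μ ^ 2 * d ^ 2) ≤ 1 :=
      Real.sqrt_le_one.mpr (by nlinarith [sq_nonneg (μ * d)])
    exact mul_le_mul_of_nonneg_left
      (mul_le_of_le_one_right (Real.sqrt_nonneg _) hsqrt_le_one) hηf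
  linarith [mul_add ηf (μ * |ρ| * d) (√(1 - ρ ^ 2) * √(1 - μ ^ 2 * d ^ 2))]

lemma mul_cost_le_sum (L : ℕ) (η ρ μ δ : ℕ → ℝ) (hη : ∀ l ≤ L, 0 < η l)
    (hρ : ∀ l, 1 ≤ l → l ≤ L → |ρ l| ≤ 1)
    (hμ : ∀ l, 1 ≤ l → l ≤ L → μ l = η (l - 1) / η l)
    (hδ0 : δ 0 = 1)
    (hδ : ∀ l, 1 ≤ l → l ≤ L →
      δ l = μ l * |ρ l| * δ (l - 1) + √(1 - ρ l ^ 2) * √(1 - μ l ^ 2 * δ (l - 1) ^ 2)) :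
    ∀ l ≤ L, 0 ≤ δ l ∧ η l * δ l ≤ η 0 + ∑ k ∈ Icc 1 l, η k * √(1 - ρ k ^ 2) := by
  intro l hl
  induction l with
  | zero => simp [hδ0]
  | succ n ih =>
    obtain ⟨hδn, hbound⟩ := ih (Nat.le_of_succ_le hl)
    have hn1 : 1 ≤ n + 1 := Nat.le_add_left 1 n
    have hηn := hη n (Nat.le_of_succ_le hl)
    have hηn1 := hη (n + 1) hl
    have hμn : μ (n + 1) = η n / η (n + 1) := hμ (n + 1) hn1 hl
    have hδn1 : δ (n + 1) = μ (n + 1) * |ρ (n + 1)| * δ n +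
        √(1 - ρ (n + 1) ^ 2) * √(1 - μ (n + 1) ^ 2 * δ n ^ 2) := hδ (n + 1) hn1 hl
    have hμ_nonneg : 0 ≤ μ (n + 1) := by rw [hμn]; positivity
    have hstep := mul_cost_step_le (μ := μ (n + 1)) hηn1.le (by rw [hμn]; field_simp)
      (hρ (n + 1) hn1 hl) (mul_nonneg hηn.le hδn)
    rw [← hδn1] at hstep
    refine ⟨by rw [hδn1]; positivity, ?_⟩
    rw [sum_Icc_succ_top hn1]
    linarith

theorem wmlmc_cost_bound_general
    (L : ℕ)
    (η ρ μ δ : ℕ → ℝ)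
    (hη : ∀ l ≤ L, 0 < η l)
    (hρ : ∀ l, 1 ≤ l → l ≤ L → ρ l ∈ Set.Icc (-1 : ℝ) 1)
    (hμ : ∀ l, 1 ≤ l → l ≤ L → μ l = η (l - 1) / η l)
    (hδ0 : δ 0 = 1)
    (hδ : ∀ l, 1 ≤ l → l ≤ L →
      δ l = μ l * |ρ l| * δ (l - 1) +
        Real.sqrt (1 - ρ l ^ 2) * Real.sqrt (1 - μ l ^ 2 * δ (l - 1) ^ 2)) :
    η L * δ L ≤ η 0 + ∑ l ∈ Finset.Icc 1 L, η l * Real.sqrt (1 - ρ l ^ 2) ∧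
    ∀ σL v : ℝ, 0 < σL → 0 < v →
      σL * η L * δ L / v ≤
        (σL / v) * (η 0 + ∑ l ∈ Finset.Icc 1 L, η l * Real.sqrt (1 - ρ l ^ 2)) := by
  have hbound := (mul_cost_le_sum L η ρ μ δ hη
    (fun l h1 hl ↦ abs_le.mpr (hρ l h1 hl)) hμ hδ0 hδ L le_rfl).2
  refine ⟨hbound, fun σL v hσL hv ↦ ?_⟩
  rw [mul_assoc, mul_div_right_comm]
  exact mul_le_mul_of_nonneg_left hbound (by positivity)

/-- bound on the normalised cost of the optimally weighted
multilevel estimator: `η_L δ_L ≤ η₀ + Σ_{l=1}^L η_l √(1−ρ_l²)`, and hence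
`Ẽ_L = σ_L η_L δ_L / v ≤ (σ_L/v)(η₀ + Σ_{l=1}^L η_l √(1−ρ_l²))`. -/
theorem wmlmc_cost_bound
    (L : ℕ) (hL : 1 ≤ L)
    (η ρ μ δ : ℕ → ℝ)
    (hη : ∀ l ≤ L, 0 < η l)
    (hρ : ∀ l, 1 ≤ l → l ≤ L → ρ l ∈ Set.Icc (-1 : ℝ) 1)
    (hμ : ∀ l, 1 ≤ l → l ≤ L → μ l = η (l - 1) / η l)
    (hδ0 : δ 0 = 1)
    (hδ : ∀ l, 1 ≤ l → l ≤ L →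
      δ l = μ l * |ρ l| * δ (l - 1) +
        Real.sqrt (1 - ρ l ^ 2) * Real.sqrt (1 - μ l ^ 2 * δ (l - 1) ^ 2))
    (hcond : ∀ l, 1 ≤ l → l ≤ L → μ l * δ (l - 1) < |ρ l|) :
    η L * δ L ≤ η 0 + ∑ l ∈ Finset.Icc 1 L, η l * Real.sqrt (1 - ρ l ^ 2) ∧
    ∀ σL v : ℝ, 0 < σL → 0 < v →
      σL * η L * δ L / v ≤
        (σL / v) * (η 0 + ∑ l ∈ Finset.Icc 1 L, η l * Real.sqrt (1 - ρ l ^ 2)) :=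
  wmlmc_cost_bound_general L η ρ μ δ hη hρ hμ hδ0 hδ
end

section
/- Let c₁, c₂, c₃, α, β, γ be positive constants with 2α ≥ min(β,γ). Let (b_l), (Δ_l), (η_l), l = 0,1,2,…, be sequences of reals with 0 ≤ b_l ≤ c₁·2^{−αl}, Δ_l ≥ 0 with Δ_l² ≤ c₂·2^{−βl}, and η_l > 0 with η_l² ≤ c₃·2^{γl}. For L ∈ ℕ and v > 0 define the cost C(L,v) = ((1/v)·Σ_{l=0}^{L} Δ_lη_l)². Then there exists a positive constant c₄ such that for every ε ∈ (0, 1/e) there exist L ∈ ℕ and v > 0 with v² + b_L² ≤ ε² and: C(L,v) ≤ c₄ε^{−2} if β > γ; C(L,v) ≤ c₄ε^{−2}(log ε)² if β = γ; and C(L,v) ≤ c₄ε^{−2−(γ−β)/α} if β < γ. -/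
private lemma geom_le_of_lt_one {r : ℝ} (h0 : 0 ≤ r) (h1 : r < 1) (n : ℕ) :
    ∑ i ∈ Finset.range n, r ^ i ≤ 1 / (1 - r) := by
  have h1r : (0:ℝ) < 1 - r := by linarith
  rw [geom_sum_eq (ne_of_lt h1) n]
  have heq : (r ^ n - 1) / (r - 1) = (1 - r ^ n) / (1 - r) := by
    rw [← neg_div_neg_eq]; ring_nf
  rw [heq]
  exact div_le_div_of_nonneg_right (by nlinarith [pow_nonneg h0 n]) h1r.le

set_option maxHeartbeats 1000000 in
/-- numerical core of the standard multilevel Monte Carlo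
complexity theorem. -/
theorem mlmc_complexity
    (c₁ c₂ c₃ α β γ : ℝ)
    (hc₁ : 0 < c₁) (hc₂ : 0 < c₂) (hc₃ : 0 < c₃)
    (hα : 0 < α) (hβ : 0 < β) (hγ : 0 < γ)
    (hαβγ : 2 * α ≥ min β γ)
    (b Δ η : ℕ → ℝ)
    (hb : ∀ l, 0 ≤ b l ∧ b l ≤ c₁ * 2 ^ (-(α * l)))
    (hΔ : ∀ l, 0 ≤ Δ l ∧ Δ l ^ 2 ≤ c₂ * 2 ^ (-(β * l)))
    (hη : ∀ l, 0 < η l ∧ η l ^ 2 ≤ c₃ * 2 ^ (γ * l))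
    (C : ℕ → ℝ → ℝ)
    (hC : ∀ L v, C L v = ((1 / v) * ∑ l ∈ Finset.range (L + 1), Δ l * η l) ^ 2) :
    ∃ c₄ : ℝ, 0 < c₄ ∧
      ∀ ε : ℝ, 0 < ε → ε < 1 / Real.exp 1 →
        ∃ L : ℕ, ∃ v : ℝ, 0 < v ∧ v ^ 2 + b L ^ 2 ≤ ε ^ 2 ∧
          (β > γ → C L v ≤ c₄ * ε ^ (-2 : ℝ)) ∧
          (β = γ → C L v ≤ c₄ * ε ^ (-2 : ℝ) * Real.log ε ^ 2) ∧
          (β < γ → C L v ≤ c₄ * ε ^ (-2 - (γ - β) / α)) := by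
  have h2pos : (0:ℝ) < 2 := two_pos
  have hlog2 : (0:ℝ) < Real.log 2 := Real.log_pos one_lt_two
  have hsqrt2 : (0:ℝ) < Real.sqrt 2 := by positivity
  obtain ⟨M, hM_def⟩ : ∃ M : ℝ, M = Real.sqrt (c₂ * c₃) := ⟨_, rfl⟩
  have hM : 0 < M := by rw [hM_def]; positivity
  obtain ⟨r, hr_def⟩ : ∃ r : ℝ, r = (2:ℝ) ^ ((γ - β) / 2) := ⟨_, rfl⟩
  have hr : 0 < r := by rw [hr_def]; positivity
  -- pointwise bound on the summand
  have hDη : ∀ l : ℕ, Δ l * η l ≤ M * r ^ l := by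
    intro l
    have hΔl := hΔ l; have hηl := hη l
    refine le_of_pow_le_pow_left₀ two_ne_zero (by positivity) ?_
    have h1 : (Δ l * η l) ^ 2 ≤ (c₂ * 2 ^ (-(β * (l:ℝ)))) * (c₃ * 2 ^ (γ * (l:ℝ))) := by
      rw [mul_pow]
      exact mul_le_mul hΔl.2 hηl.2 (by positivity) (by positivity)
    have hr2 : (r ^ l) ^ 2 = (2:ℝ) ^ ((γ - β) * (l:ℝ)) := by
      rw [hr_def, ← pow_mul, ← Real.rpow_natCast ((2:ℝ) ^ ((γ - β) / 2)) (l * 2),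
        ← Real.rpow_mul (by norm_num : (0:ℝ) ≤ 2)]
      congr 1
      push_cast; ring
    have h3 : (c₂ * 2 ^ (-(β * (l:ℝ)))) * (c₃ * 2 ^ (γ * (l:ℝ)))
        = c₂ * c₃ * (2:ℝ) ^ ((γ - β) * (l:ℝ)) := by
      rw [mul_mul_mul_comm, ← Real.rpow_add h2pos]
      congr 2
      ring
    calc (Δ l * η l) ^ 2 ≤ c₂ * c₃ * (2:ℝ) ^ ((γ - β) * (l:ℝ)) := by rw [← h3]; exact h1
      _ = (M * r ^ l) ^ 2 := by
          rw [mul_pow, hr2, hM_def, Real.sq_sqrt (by positivity)]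
  -- constants
  obtain ⟨K, hK_def⟩ : ∃ K : ℝ, K = (2:ℝ) ^ α * Real.sqrt 2 * c₁ + 1 := ⟨_, rfl⟩
  have hK1 : 1 < K := by
    have : (0:ℝ) < (2:ℝ) ^ α * Real.sqrt 2 * c₁ := by positivity
    rw [hK_def]; linarith only [this]
  have hK0 : 0 < K := by linarith only [hK1]
  obtain ⟨A, hA_def⟩ : ∃ A : ℝ,
      A = (|Real.log (Real.sqrt 2 * c₁)| + 1) / (α * Real.log 2) + 2 := ⟨_, rfl⟩
  have hA2 : 2 ≤ A := by
    have : 0 ≤ (|Real.log (Real.sqrt 2 * c₁)| + 1) / (α * Real.log 2) := by positivity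
    rw [hA_def]; linarith only [this]
  obtain ⟨cA, hcA_def⟩ : ∃ x : ℝ, x = 2 * M ^ 2 / (1 - r) ^ 2 := ⟨_, rfl⟩
  obtain ⟨cB, hcB_def⟩ : ∃ x : ℝ, x = 2 * M ^ 2 * A ^ 2 := ⟨_, rfl⟩
  obtain ⟨cC, hcC_def⟩ : ∃ x : ℝ,
      x = 2 * (M * r / (r - 1)) ^ 2 * K ^ ((γ - β) / α) := ⟨_, rfl⟩
  have hcA0 : 0 ≤ cA := by rw [hcA_def]; positivity
  have hcB0 : 0 ≤ cB := by rw [hcB_def]; positivity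
  have hcC0 : 0 ≤ cC := by rw [hcC_def]; positivity
  refine ⟨cA + cB + cC + 1, by positivity, ?_⟩
  intro ε hε hε1
  have hε1' : ε < 1 := by
    have h1e : 1 / Real.exp 1 < 1 := by
      rw [div_lt_one (Real.exp_pos 1)]
      have := Real.add_one_le_exp (1:ℝ)
      linarith only [this]
    linarith only [h1e, hε1]
  have hlogε : Real.log ε < -1 := by
    have h := Real.log_lt_log hε hε1
    rwa [show (1:ℝ) / Real.exp 1 = Real.exp (-1) by rw [Real.exp_neg]; ring,
      Real.log_exp] at h
  obtain ⟨s, hs_def⟩ : ∃ s : ℝ, s = Real.sqrt 2 * c₁ / ε := ⟨_, rfl⟩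
  have hs : 0 < s := by rw [hs_def]; positivity
  obtain ⟨t, ht_def⟩ : ∃ t : ℝ, t = Real.log s / (α * Real.log 2) := ⟨_, rfl⟩
  obtain ⟨L, hL_def⟩ : ∃ L : ℕ, L = ⌈t⌉₊ := ⟨_, rfl⟩
  obtain ⟨v, hv_def⟩ : ∃ v : ℝ, v = ε / Real.sqrt 2 := ⟨_, rfl⟩
  have hv : 0 < v := by rw [hv_def]; positivity
  have hαlog : 0 < α * Real.log 2 := by positivity
  -- lower bound on 2^(α L)
  have h2aL : s ≤ (2:ℝ) ^ (α * (L:ℝ)) := by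
    have ht : t ≤ (L:ℝ) := by rw [hL_def]; exact Nat.le_ceil t
    have h1 : Real.log s ≤ Real.log 2 * (α * (L:ℝ)) := by
      have h2 := mul_le_mul_of_nonneg_right ht hαlog.le
      rw [ht_def, div_mul_cancel₀ _ (ne_of_gt hαlog)] at h2
      linarith only [h2]
    calc s = Real.exp (Real.log s) := (Real.exp_log hs).symm
      _ ≤ Real.exp (Real.log 2 * (α * (L:ℝ))) := Real.exp_le_exp.mpr h1
      _ = (2:ℝ) ^ (α * (L:ℝ)) := (Real.rpow_def_of_pos h2pos _).symm
  -- bias bound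
  have hbLv : b L ≤ v := by
    have h1 : (2:ℝ) ^ (-(α * (L:ℝ))) ≤ s⁻¹ := by
      rw [Real.rpow_neg h2pos.le]
      exact inv_anti₀ hs h2aL
    have h2 : c₁ * (2:ℝ) ^ (-(α * (L:ℝ))) ≤ c₁ * s⁻¹ :=
      mul_le_mul_of_nonneg_left h1 hc₁.le
    have h3 : c₁ * s⁻¹ = v := by
      rw [hs_def, hv_def]
      field_simp
    exact le_trans (hb L).2 (by rw [← h3]; exact h2)
  have hv2 : v ^ 2 = ε ^ 2 / 2 := by
    rw [hv_def, div_pow, Real.sq_sqrt h2pos.le]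
  have hvar : v ^ 2 + b L ^ 2 ≤ ε ^ 2 := by
    have hb2 : b L ^ 2 ≤ v ^ 2 := pow_le_pow_left₀ (hb L).1 hbLv 2
    rw [hv2] at hb2 ⊢
    linarith only [hb2]
  -- cost rewriting
  obtain ⟨S, hS_def⟩ : ∃ S : ℝ, S = ∑ l ∈ Finset.range (L + 1), Δ l * η l := ⟨_, rfl⟩
  have hS0 : 0 ≤ S := by
    rw [hS_def]
    exact Finset.sum_nonneg fun l _ => mul_nonneg (hΔ l).1 (hη l).1.le
  have hSle : S ≤ M * ∑ l ∈ Finset.range (L + 1), r ^ l := by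
    rw [hS_def, Finset.mul_sum]
    exact Finset.sum_le_sum fun l _ => hDη l
  have hCval : C L v = 2 / ε ^ 2 * S ^ 2 := by
    rw [hC L v, ← hS_def, mul_pow, div_pow, one_pow, hv2, one_div, inv_div]
  have hεpow : ε ^ (-2 : ℝ) = (ε ^ 2)⁻¹ := by
    rw [show ((-2):ℝ) = -((2:ℕ):ℝ) by norm_num, Real.rpow_neg hε.le, Real.rpow_natCast]
  have hε2 : (0:ℝ) < (ε ^ 2)⁻¹ := by positivity
  -- upper bound on 2^(α L)
  have h2aLup : (2:ℝ) ^ (α * (L:ℝ)) ≤ K / ε := by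
    rcases le_or_gt 0 t with ht0 | ht0
    · have hLt : (L:ℝ) < t + 1 := by rw [hL_def]; exact Nat.ceil_lt_add_one ht0
      have h2 : t * (α * Real.log 2) = Real.log s := by
        rw [ht_def, div_mul_cancel₀ _ (ne_of_gt hαlog)]
      have h1 : Real.log 2 * (α * (L:ℝ)) ≤ Real.log s + α * Real.log 2 := by
        have h6 := mul_lt_mul_of_pos_right hLt hαlog
        linarith only [h6, h2]
      have h3 : (2:ℝ) ^ (α * (L:ℝ)) ≤ Real.exp (Real.log s + α * Real.log 2) := by
        rw [Real.rpow_def_of_pos h2pos]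
        exact Real.exp_le_exp.mpr h1
      have h4 : Real.exp (Real.log s + α * Real.log 2) = s * (2:ℝ) ^ α := by
        rw [Real.exp_add, Real.exp_log hs, Real.rpow_def_of_pos h2pos]
        ring_nf
      have h5 : s * (2:ℝ) ^ α ≤ K / ε := by
        rw [hs_def, hK_def, div_mul_eq_mul_div, div_le_div_iff₀ hε hε]
        nlinarith only [hε]
      rw [h4] at h3
      linarith only [h3, h5]
    · have hL0 : L = 0 := by
        rw [hL_def, Nat.ceil_eq_zero]
        exact ht0.le
      rw [hL0]
      push_cast
      rw [mul_zero, Real.rpow_zero, le_div_iff₀ hε]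
      nlinarith only [hε1', hK1]
  -- the three cases
  refine ⟨L, v, hv, hvar, ?_, ?_, ?_⟩
  · -- β > γ
    intro hbg
    have hr1 : r < 1 := by
      rw [hr_def]
      exact Real.rpow_lt_one_of_one_lt_of_neg one_lt_two (by linarith only [hbg])
    have h1rne : (1 - r) ≠ 0 := by intro h; linarith only [h, hr1]
    have hsum : ∑ l ∈ Finset.range (L + 1), r ^ l ≤ 1 / (1 - r) :=
      geom_le_of_lt_one hr.le hr1 (L + 1)
    have hS1 : S ≤ M / (1 - r) := by
      calc S ≤ M * ∑ l ∈ Finset.range (L + 1), r ^ l := hSle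
        _ ≤ M * (1 / (1 - r)) := mul_le_mul_of_nonneg_left hsum hM.le
        _ = M / (1 - r) := by ring
    have hS2 : S ^ 2 ≤ (M / (1 - r)) ^ 2 := pow_le_pow_left₀ hS0 hS1 2
    rw [hCval, hεpow]
    calc 2 / ε ^ 2 * S ^ 2 ≤ 2 / ε ^ 2 * (M / (1 - r)) ^ 2 :=
          mul_le_mul_of_nonneg_left hS2 (by positivity)
      _ = cA * (ε ^ 2)⁻¹ := by
          rw [hcA_def]
          field_simp
      _ ≤ (cA + cB + cC + 1) * (ε ^ 2)⁻¹ :=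
          mul_le_mul_of_nonneg_right (by linarith only [hcB0, hcC0]) hε2.le
  · -- β = γ
    intro hbg
    have hr1 : r = 1 := by rw [hr_def, hbg, sub_self, zero_div, Real.rpow_zero]
    have hsum : ∑ l ∈ Finset.range (L + 1), r ^ l = (L:ℝ) + 1 := by
      rw [hr1]
      simp
    have hmlog : 1 < -Real.log ε := by linarith only [hlogε]
    have hLbound : (L:ℝ) + 1 ≤ A * (-Real.log ε) := by
      rcases le_or_gt 0 t with ht0 | ht0
      · have hLt : (L:ℝ) < t + 1 := by rw [hL_def]; exact Nat.ceil_lt_add_one ht0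
        have hlogs : Real.log s = Real.log (Real.sqrt 2 * c₁) - Real.log ε := by
          rw [hs_def, Real.log_div (by positivity) (ne_of_gt hε)]
        have h1 : Real.log s ≤ (-Real.log ε) * (|Real.log (Real.sqrt 2 * c₁)| + 1) := by
          rw [hlogs]
          nlinarith only [hmlog, le_abs_self (Real.log (Real.sqrt 2 * c₁)),
            abs_nonneg (Real.log (Real.sqrt 2 * c₁))]
        have h2 : t ≤ (-Real.log ε) * (|Real.log (Real.sqrt 2 * c₁)| + 1) / (α * Real.log 2) := by
          rw [ht_def]
          exact div_le_div_of_nonneg_right h1 hαlog.le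
        have h2' : t ≤ (-Real.log ε) * ((|Real.log (Real.sqrt 2 * c₁)| + 1) / (α * Real.log 2)) := by
          rw [← mul_div_assoc]; exact h2
        rw [hA_def]
        linarith only [hLt, h2', hmlog]
      · have hL0 : L = 0 := by rw [hL_def, Nat.ceil_eq_zero]; exact ht0.le
        rw [hL0]
        push_cast
        nlinarith only [hA2, hmlog]
    have hS1 : S ≤ M * (A * (-Real.log ε)) := by
      calc S ≤ M * ((L:ℝ) + 1) := by rw [← hsum]; exact hSle
        _ ≤ M * (A * (-Real.log ε)) := mul_le_mul_of_nonneg_left hLbound hM.le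
    have hS2 : S ^ 2 ≤ M ^ 2 * A ^ 2 * Real.log ε ^ 2 := by
      calc S ^ 2 ≤ (M * (A * (-Real.log ε))) ^ 2 := pow_le_pow_left₀ hS0 hS1 2
        _ = M ^ 2 * A ^ 2 * Real.log ε ^ 2 := by ring
    rw [hCval, hεpow]
    have hlogsq : 0 < Real.log ε ^ 2 := by nlinarith only [hlogε]
    calc 2 / ε ^ 2 * S ^ 2 ≤ 2 / ε ^ 2 * (M ^ 2 * A ^ 2 * Real.log ε ^ 2) :=
          mul_le_mul_of_nonneg_left hS2 (by positivity)
      _ = cB * (ε ^ 2)⁻¹ * Real.log ε ^ 2 := by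
          rw [hcB_def]
          field_simp
      _ ≤ (cA + cB + cC + 1) * (ε ^ 2)⁻¹ * Real.log ε ^ 2 := by
          apply mul_le_mul_of_nonneg_right _ hlogsq.le
          exact mul_le_mul_of_nonneg_right (by linarith only [hcA0, hcC0]) hε2.le
  · -- β < γ
    intro hbg
    have hθ : 0 ≤ (γ - β) / (2 * α) := div_nonneg (by linarith only [hbg]) (by linarith only [hα])
    have hr1 : 1 < r := by
      rw [hr_def]
      calc (1:ℝ) = (2:ℝ) ^ (0:ℝ) := (Real.rpow_zero 2).symm
        _ < (2:ℝ) ^ ((γ - β) / 2) :=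
          (Real.rpow_lt_rpow_left_iff one_lt_two).mpr (by linarith only [hbg])
    have hrm : 0 < r - 1 := by linarith only [hr1]
    have hsum : ∑ l ∈ Finset.range (L + 1), r ^ l ≤ r ^ (L + 1) / (r - 1) := by
      rw [geom_sum_eq (ne_of_gt hr1) (L + 1)]
      exact div_le_div_of_nonneg_right (by linarith only []) hrm.le
    have hrL : r ^ L = ((2:ℝ) ^ (α * (L:ℝ))) ^ ((γ - β) / (2 * α)) := by
      rw [hr_def, ← Real.rpow_natCast ((2:ℝ) ^ ((γ - β) / 2)) L,
        ← Real.rpow_mul (by norm_num : (0:ℝ) ≤ 2),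
        ← Real.rpow_mul (by norm_num : (0:ℝ) ≤ 2)]
      congr 1
      field_simp
    have hrLle : r ^ L ≤ (K / ε) ^ ((γ - β) / (2 * α)) := by
      rw [hrL]
      exact Real.rpow_le_rpow (Real.rpow_pos_of_pos h2pos _).le h2aLup hθ
    have hKε : (0:ℝ) ≤ K / ε := by positivity
    have hS1 : S ≤ M * r / (r - 1) * (K / ε) ^ ((γ - β) / (2 * α)) := by
      calc S ≤ M * ∑ l ∈ Finset.range (L + 1), r ^ l := hSle
        _ ≤ M * (r ^ (L + 1) / (r - 1)) := mul_le_mul_of_nonneg_left hsum hM.le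
        _ = M * r / (r - 1) * r ^ L := by rw [pow_succ]; ring
        _ ≤ M * r / (r - 1) * (K / ε) ^ ((γ - β) / (2 * α)) :=
            mul_le_mul_of_nonneg_left hrLle (by positivity)
    have hS2 : S ^ 2 ≤ (M * r / (r - 1)) ^ 2 * (K / ε) ^ ((γ - β) / α) := by
      calc S ^ 2 ≤ (M * r / (r - 1) * (K / ε) ^ ((γ - β) / (2 * α))) ^ 2 :=
            pow_le_pow_left₀ hS0 hS1 2
        _ = (M * r / (r - 1)) ^ 2 * ((K / ε) ^ ((γ - β) / (2 * α))) ^ 2 := by ring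
        _ = (M * r / (r - 1)) ^ 2 * (K / ε) ^ ((γ - β) / α) := by
            congr 1
            rw [← Real.rpow_natCast ((K / ε) ^ ((γ - β) / (2 * α))) 2,
              ← Real.rpow_mul hKε]
            congr 1
            field_simp
            ring
    have hsplit : ε ^ (-2 - (γ - β) / α) = (ε ^ 2)⁻¹ * (ε ^ ((γ - β) / α))⁻¹ := by
      rw [show (-2 - (γ - β) / α) = -(((2:ℕ):ℝ)) + -((γ - β) / α) by push_cast; ring,
        Real.rpow_add hε, Real.rpow_neg hε.le, Real.rpow_natCast, Real.rpow_neg hε.le]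
    have hεz : (0:ℝ) < ε ^ ((γ - β) / α) := Real.rpow_pos_of_pos hε _
    calc C L v = 2 / ε ^ 2 * S ^ 2 := hCval
      _ ≤ 2 / ε ^ 2 * ((M * r / (r - 1)) ^ 2 * (K / ε) ^ ((γ - β) / α)) :=
          mul_le_mul_of_nonneg_left hS2 (by positivity)
      _ = cC * ((ε ^ 2)⁻¹ * (ε ^ ((γ - β) / α))⁻¹) := by
          rw [hcC_def, Real.div_rpow hK0.le hε.le]
          field_simp
      _ ≤ (cA + cB + cC + 1) * ((ε ^ 2)⁻¹ * (ε ^ ((γ - β) / α))⁻¹) :=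
          mul_le_mul_of_nonneg_right (by linarith only [hcA0, hcB0]) (by positivity)
      _ = (cA + cB + cC + 1) * ε ^ (-2 - (γ - β) / α) := by rw [hsplit]
end

section
/- Let σ₀, σ₁, η₀, η₁ be positive reals, let γ > 0, assume η₁ = 2^{γ/2}·η₀, and let ρ₁ ∈ [−1,1]. Then η₀σ₀ + η₁·√(σ₁² − 2ρ₁σ₀σ₁ + σ₀²) ≤ η₁σ₁ if and only if ρ₁ ≥ (σ₀/σ₁)·(2^γ − 1)/2^{γ+1} + 2^{−γ/2}. -/
/-- two-level MLMC beats single-level Monte Carlo at level 1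
iff the correlation is large enough:
`η₀σ₀ + η₁√(σ₁² − 2ρ₁σ₀σ₁ + σ₀²) ≤ η₁σ₁ ↔ ρ₁ ≥ (σ₀/σ₁)(2^γ−1)/2^{γ+1} + 2^{−γ/2}`. -/
theorem mlmc_coarsest_level_condition
    (σ₀ σ₁ η₀ η₁ γ ρ₁ : ℝ)
    (hσ₀ : 0 < σ₀) (hσ₁ : 0 < σ₁) (hη₀ : 0 < η₀) (hη₁ : 0 < η₁)
    (hγ : 0 < γ) (hcost : η₁ = 2 ^ (γ / 2) * η₀)
    (hρ : ρ₁ ∈ Set.Icc (-1 : ℝ) 1) :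
    η₀ * σ₀ + η₁ * Real.sqrt (σ₁ ^ 2 - 2 * ρ₁ * σ₀ * σ₁ + σ₀ ^ 2) ≤ η₁ * σ₁ ↔
      ρ₁ ≥ (σ₀ / σ₁) * (2 ^ γ - 1) / 2 ^ (γ + 1) + 2 ^ (-(γ / 2)) := by
  obtain ⟨hρl, hρu⟩ := hρ
  set a : ℝ := 2 ^ (γ / 2) with ha
  have ha1 : 1 < a :=
    (Real.one_lt_rpow_iff_of_pos (by norm_num)).2 (Or.inl ⟨by norm_num, by linarith⟩)
  have ha0 : 0 < a := lt_trans one_pos ha1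
  have hane : a ≠ 0 := ne_of_gt ha0
  have ha2 : (0:ℝ) < a ^ 2 := by positivity
  have hsq : (2 : ℝ) ^ γ = a ^ 2 := by
    rw [ha, ← Real.rpow_natCast ((2:ℝ) ^ (γ / 2)) 2, ← Real.rpow_mul (by norm_num)]
    norm_num
  have hadd : (2 : ℝ) ^ (γ + 1) = 2 * a ^ 2 := by
    rw [Real.rpow_add (by norm_num), hsq, Real.rpow_one]; ring
  have hneg : (2 : ℝ) ^ (-(γ / 2)) = 1 / a := by
    rw [Real.rpow_neg (by norm_num), ← ha, one_div]
  rw [hsq, hadd, hneg, hcost]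
  have hid : a * η₀ * (σ₁ - σ₀ / a) = a * η₀ * σ₁ - η₀ * σ₀ := by
    field_simp
  have hstep : η₀ * σ₀ + a * η₀ * Real.sqrt (σ₁ ^ 2 - 2 * ρ₁ * σ₀ * σ₁ + σ₀ ^ 2)
      ≤ a * η₀ * σ₁ ↔ Real.sqrt (σ₁ ^ 2 - 2 * ρ₁ * σ₀ * σ₁ + σ₀ ^ 2) ≤ σ₁ - σ₀ / a := by
    constructor
    · intro h
      have h' : a * η₀ * Real.sqrt (σ₁ ^ 2 - 2 * ρ₁ * σ₀ * σ₁ + σ₀ ^ 2)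
          ≤ a * η₀ * (σ₁ - σ₀ / a) := by linarith [hid]
      exact (mul_le_mul_iff_right₀ (mul_pos ha0 hη₀)).1 h'
    · intro h
      have h' := (mul_le_mul_iff_right₀ (mul_pos ha0 hη₀)).2 h
      linarith [hid, h']
  rw [hstep, Real.sqrt_le_iff]
  have h2 : σ₀ / σ₁ * (a ^ 2 - 1) / (2 * a ^ 2) + 1 / a
      = (σ₀ * (a ^ 2 - 1) + 2 * a * σ₁) / (2 * a ^ 2 * σ₁) := by
    field_simp
  have hexp : (σ₁ - σ₀ / a) ^ 2 = (σ₁ * a - σ₀) ^ 2 / a ^ 2 := by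
    field_simp
  rw [ge_iff_le, h2, div_le_iff₀ (by positivity)]
  constructor
  · rintro ⟨hc, hle⟩
    rw [hexp, le_div_iff₀ ha2] at hle
    nlinarith [mul_pos hσ₀ hσ₁, hle, sq_nonneg (σ₁ * a - σ₀)]
  · intro h
    have h1 : σ₀ * (a ^ 2 - 1) + 2 * a * σ₁ ≤ 2 * a ^ 2 * σ₁ := by
      nlinarith [mul_le_mul_of_nonneg_right hρu
        (show (0:ℝ) ≤ 2 * a ^ 2 * σ₁ by positivity)]
    have hc : σ₀ ≤ σ₁ * a := by
      nlinarith [mul_pos hσ₀ (mul_pos (sub_pos.2 ha1) (sub_pos.2 ha1)),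
        mul_pos hσ₀ (sub_pos.2 ha1), mul_pos hσ₁ (sub_pos.2 ha1)]
    have hc' : 0 ≤ σ₁ - σ₀ / a := by
      rw [sub_nonneg, div_le_iff₀ ha0]; exact hc
    refine ⟨hc', ?_⟩
    rw [hexp, le_div_iff₀ ha2]
    nlinarith [mul_le_mul_of_nonneg_left h hσ₀.le]
end

section
/- Let σ, σ′, η, η′ be positive reals, ρ ∈ [−1,1], δ′ ∈ (0,1], and set μ = η′/η; assume μδ′ < 1. Then (σ′/σ)·μδ′ + √(σ² − 2ρσσ′ + σ′²)/σ < 1 if and only if ρ > μδ′ + (σ′/(2σ))·(1 − μ²δ′²). -/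
/-- the (unweighted) two-term MLMC normalised cost is below 1
iff the correlation exceeds `μδ' + (σ'/(2σ))(1 − μ²δ'²)`. -/
theorem mlmc_cheaper_than_single_level_iff
    (σ σ' η η' ρ δ' μ : ℝ)
    (hσ : 0 < σ) (hσ' : 0 < σ') (hη : 0 < η) (hη' : 0 < η')
    (hρ : ρ ∈ Set.Icc (-1 : ℝ) 1)
    (hδ'pos : 0 < δ') (hδ'le : δ' ≤ 1)
    (hμ : μ = η' / η) (hμδ : μ * δ' < 1) :
    (σ' / σ) * (μ * δ') + Real.sqrt (σ ^ 2 - 2 * ρ * σ * σ' + σ' ^ 2) / σ < 1 ↔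
      ρ > μ * δ' + (σ' / (2 * σ)) * (1 - μ ^ 2 * δ' ^ 2) := by
  have hμpos : 0 < μ := by rw [hμ]; positivity
  have ha : 0 < μ * δ' := mul_pos hμpos hδ'pos
  set s := Real.sqrt (σ ^ 2 - 2 * ρ * σ * σ' + σ' ^ 2) with hs
  have hsnn : 0 ≤ s := Real.sqrt_nonneg _
  have h2σ : (0:ℝ) < 2 * σ := by linarith
  have hrw : ρ - (μ * δ' + (σ' / (2 * σ)) * (1 - μ ^ 2 * δ' ^ 2)) =
      (2 * σ * ρ - (2 * σ * (μ * δ') + σ' * (1 - μ ^ 2 * δ' ^ 2))) / (2 * σ) := by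
    field_simp
  constructor
  · intro h
    have h1 : (σ' * (μ * δ') + s) / σ < 1 := by
      have heq : (σ' * (μ * δ') + s) / σ = (σ' / σ) * (μ * δ') + s / σ := by ring
      rw [heq]; exact h
    rw [div_lt_one hσ] at h1
    have hy : 0 < σ - σ' * (μ * δ') := by linarith
    have key : σ ^ 2 - 2 * ρ * σ * σ' + σ' ^ 2 < (σ - σ' * (μ * δ')) ^ 2 :=
      (Real.sqrt_lt' hy).mp (by linarith : s < σ - σ' * (μ * δ'))
    have h2 : 2 * σ * ρ > 2 * σ * (μ * δ') + σ' * (1 - μ ^ 2 * δ' ^ 2) := by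
      nlinarith [key, hσ', mul_pos hσ hσ']
    rw [gt_iff_lt, ← sub_pos, hrw]
    apply div_pos (by linarith) h2σ
  · intro h
    have h2 : 2 * σ * ρ > 2 * σ * (μ * δ') + σ' * (1 - μ ^ 2 * δ' ^ 2) := by
      rw [gt_iff_lt, ← sub_pos] at h ⊢
      rw [hrw] at h
      have := (div_pos_iff.mp h)
      rcases this with ⟨hnum, _⟩ | ⟨_, hden⟩
      · linarith
      · linarith
    have hy : 0 < σ - σ' * (μ * δ') := by
      have hρ1 : ρ ≤ 1 := hρ.2
      nlinarith [mul_pos hσ' ha, sq_nonneg (1 - μ * δ')]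
    have key : σ ^ 2 - 2 * ρ * σ * σ' + σ' ^ 2 < (σ - σ' * (μ * δ')) ^ 2 := by
      nlinarith [h2, hσ']
    have hslt : s < σ - σ' * (μ * δ') := (Real.sqrt_lt' hy).mpr key
    have heq : (σ' / σ) * (μ * δ') + s / σ = (σ' * (μ * δ') + s) / σ := by ring
    rw [heq, div_lt_one hσ]
    linarith
end

section
/- Let σ, σ′ > 0, ρ ∈ [−1,1], and x ∈ [0,1]. Then σ·|ρ|·x + σ·√(1−ρ²)·√(1−x²) ≤ σ′·x + √(σ² − 2ρσσ′ + σ′²). Moreover, if x < 1 and equality holds, then σ′/σ = ρ − x·√((1−ρ²)/(1−x²)). -/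
/-!
Write `s = √(1 - ρ²)` and `t = √(1 - x²)`, so that `(x, t)` is a unit vector and
`(|ρ|σ - σ')² + (σ s)² = σ² - 2|ρ|σσ' + σ'²`. Cauchy–Schwarz in the plane then gives
`σ|ρ|x + σ s t - σ'x = (|ρ|σ - σ') x + (σ s) t ≤ √(σ² - 2|ρ|σσ' + σ'²)`, and replacing `|ρ|` by
`ρ` only enlarges the radicand since `σσ' > 0`. Equality forces both steps to be sharp:
`|ρ| = ρ`, and `(ρσ - σ', σ s)` is parallel to `(x, t)`, i.e. `(ρσ - σ') t = σ s x`.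
-/

open Real

theorem mul_add_mul_le_sqrt_sq_add_sq {a b x y : ℝ} (h : x ^ 2 + y ^ 2 = 1) :
    a * x + b * y ≤ √(a ^ 2 + b ^ 2) :=
  le_sqrt_of_sq_le <| by nlinarith [sq_nonneg (a * y - b * x)]

theorem mul_eq_mul_of_mul_add_mul_eq_sqrt_sq_add_sq {a b x y : ℝ} (h : x ^ 2 + y ^ 2 = 1)
    (heq : a * x + b * y = √(a ^ 2 + b ^ 2)) : a * y = b * x := by
  have hsq : (a * x + b * y) ^ 2 = a ^ 2 + b ^ 2 := by
    rw [heq, sq_sqrt (by positivity)]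
  -- Lagrange's identity: `(ax + by)² + (ay - bx)² = (a² + b²)(x² + y²)`.
  have hzero : (a * y - b * x) ^ 2 = 0 := by
    linear_combination (a ^ 2 + b ^ 2) * h - hsq
  linear_combination pow_eq_zero_iff two_ne_zero |>.mp hzero

theorem sq_abs_mul_sub_add_sq_mul_sqrt_one_sub_sq {ρ : ℝ} (σ σ' : ℝ) (hρ : ρ ^ 2 ≤ 1) :
    (|ρ| * σ - σ') ^ 2 + (σ * √(1 - ρ ^ 2)) ^ 2 = σ ^ 2 - 2 * |ρ| * σ * σ' + σ' ^ 2 := by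
  rw [mul_pow σ, sq_sqrt (by linarith), ← sq_abs ρ]
  ring

/-- one step of the weighted MLMC normalised-cost recursion is
no more expensive than the standard MLMC step:
`σ|ρ|x + σ√(1−ρ²)√(1−x²) ≤ σ'x + √(σ² − 2ρσσ' + σ'²)`, with the stated
necessary condition for equality when `x < 1`. -/
theorem wmlmc_step_le_mlmc_step
    (σ σ' ρ x : ℝ) (hσ : 0 < σ) (hσ' : 0 < σ')
    (hρ : ρ ∈ Set.Icc (-1 : ℝ) 1) (hx : x ∈ Set.Icc (0 : ℝ) 1) :
    σ * |ρ| * x + σ * Real.sqrt (1 - ρ ^ 2) * Real.sqrt (1 - x ^ 2) ≤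
      σ' * x + Real.sqrt (σ ^ 2 - 2 * ρ * σ * σ' + σ' ^ 2) ∧
    (x < 1 →
      σ * |ρ| * x + σ * Real.sqrt (1 - ρ ^ 2) * Real.sqrt (1 - x ^ 2) =
        σ' * x + Real.sqrt (σ ^ 2 - 2 * ρ * σ * σ' + σ' ^ 2) →
      σ' / σ = ρ - x * Real.sqrt ((1 - ρ ^ 2) / (1 - x ^ 2))) := by
  obtain ⟨hρ₁, hρ₂⟩ := hρ
  obtain ⟨hx₀, hx₁⟩ := hx
  have hρsq : ρ ^ 2 ≤ 1 := by nlinarith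
  have hunit : x ^ 2 + √(1 - x ^ 2) ^ 2 = 1 := by rw [sq_sqrt (by nlinarith)]; ring
  have hnorm := sq_abs_mul_sub_add_sq_mul_sqrt_one_sub_sq σ σ' hρsq
  have hcs := mul_add_mul_le_sqrt_sq_add_sq (a := |ρ| * σ - σ') (b := σ * √(1 - ρ ^ 2)) hunit
  rw [hnorm] at hcs
  have hradicand : σ ^ 2 - 2 * |ρ| * σ * σ' + σ' ^ 2 ≤ σ ^ 2 - 2 * ρ * σ * σ' + σ' ^ 2 := by
    nlinarith [le_abs_self ρ, mul_pos hσ hσ']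
  refine ⟨by linarith [sqrt_le_sqrt hradicand], fun hxlt heq => ?_⟩
  have habs : |ρ| = ρ := by
    by_contra hne
    have hlt : σ ^ 2 - 2 * |ρ| * σ * σ' + σ' ^ 2 < σ ^ 2 - 2 * ρ * σ * σ' + σ' ^ 2 := by
      nlinarith [lt_of_le_of_ne (le_abs_self ρ) (Ne.symm hne), mul_pos hσ hσ']
    linarith [sqrt_lt_sqrt (hnorm ▸ by positivity) hlt]
  rw [habs] at hnorm heq
  have hparallel := mul_eq_mul_of_mul_add_mul_eq_sqrt_sq_add_sq hunit
    (a := ρ * σ - σ') (b := σ * √(1 - ρ ^ 2)) (by rw [hnorm]; linarith)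
  have ht : 0 < √(1 - x ^ 2) := sqrt_pos.mpr (by nlinarith)
  rw [sqrt_div (by linarith)]
  field_simp
  linear_combination -hparallel
end

section
/- Let ρ ∈ [−1,1]. Then: (a) 1/√2 + √(2(1−ρ)) < 1 if and only if ρ > 1/√2 + 1/4; and (b) for every ρ ∈ (1/√2, 1), (ρ + √(1−ρ²))/√2 < min(1, 1/√2 + √(2(1−ρ))). -/
/-!
Part (a) is `√(2(1 − ρ)) < 1 − 1/√2` squared. For part (b): if `a² + b² = 1` then
`(a + b)² = 2 − (a − b)²`, so the weighted cost `(ρ + √(1 − ρ²))/√2` is below `1` as soon as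
`ρ ≠ √(1 − ρ²)`, i.e. `ρ ≠ 1/√2`. It is also below the standard cost because
`2(1 − ρ) − (1 − ρ²) = (1 − ρ)² ≥ 0` gives `√(1 − ρ²) ≤ √(2(1 − ρ))`, while `ρ < 1`.
-/

open Real

namespace TwoLevelMLMC

/- The normalized costs `δ₁` and `δ̃₁` of the standard and the optimally weighted two-level
estimators, for `σ₀ = σ₁` and `M = 2`. -/
noncomputable def standardCost (ρ : ℝ) : ℝ := 1 / √2 + √(2 * (1 - ρ))

noncomputable def weightedCost (ρ : ℝ) : ℝ := (ρ + √(1 - ρ ^ 2)) / √2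

lemma one_div_sqrt_two_pos : 0 < 1 / √2 :=
  one_div_pos.2 (sqrt_pos.2 two_pos)

lemma one_div_sqrt_two_sq : (1 / √2) ^ 2 = 1 / 2 := by
  rw [div_pow, sq_sqrt zero_le_two, one_pow]

lemma one_div_sqrt_two_lt_one : 1 / √2 < 1 :=
  (div_lt_one (zero_lt_one.trans one_lt_sqrt_two)).2 one_lt_sqrt_two

lemma add_lt_sqrt_two_of_sq_add_sq_eq_one {a b : ℝ} (h : a ^ 2 + b ^ 2 = 1) (hab : a ≠ b) :
    a + b < √2 := by
  have hpos : 0 < (a - b) ^ 2 := sq_pos_of_ne_zero (sub_ne_zero.2 hab)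
  exact lt_sqrt_of_sq_lt (by nlinarith)

lemma sqrt_one_sub_sq_lt_self {ρ : ℝ} (hρ : 1 / √2 < ρ) : √(1 - ρ ^ 2) < ρ := by
  have hρ_pos : 0 < ρ := one_div_sqrt_two_pos.trans hρ
  have hsq : (1 / √2) ^ 2 < ρ ^ 2 := pow_lt_pow_left₀ hρ one_div_sqrt_two_pos.le two_ne_zero
  rw [sqrt_lt' hρ_pos]
  linarith [one_div_sqrt_two_sq]

lemma sqrt_one_sub_sq_le_sqrt_two_mul_one_sub (ρ : ℝ) : √(1 - ρ ^ 2) ≤ √(2 * (1 - ρ)) :=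
  sqrt_le_sqrt (by nlinarith [sq_nonneg (1 - ρ)])

theorem standardCost_lt_one_iff (ρ : ℝ) : standardCost ρ < 1 ↔ 1 / √2 + 1 / 4 < ρ := by
  have hgap : 0 < 1 - 1 / √2 := sub_pos.2 one_div_sqrt_two_lt_one
  rw [standardCost, ← lt_sub_iff_add_lt', sqrt_lt' hgap, sub_sq, one_div_sqrt_two_sq]
  constructor <;> intro h <;> linarith

theorem weightedCost_lt_one {ρ : ℝ} (hρ : 1 / √2 < ρ) (hρ_le : ρ ≤ 1) : weightedCost ρ < 1 := by
  have hρ_sq : ρ ^ 2 ≤ 1 := pow_le_one₀ (one_div_sqrt_two_pos.trans hρ).le hρ_le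
  have hsum : ρ + √(1 - ρ ^ 2) < √2 :=
    add_lt_sqrt_two_of_sq_add_sq_eq_one (by rw [sq_sqrt (by linarith)]; ring)
      (sqrt_one_sub_sq_lt_self hρ).ne'
  exact (div_lt_one (sqrt_pos.2 two_pos)).2 hsum

theorem weightedCost_lt_standardCost {ρ : ℝ} (hρ : ρ < 1) : weightedCost ρ < standardCost ρ := by
  have hsqrt2 : 0 < √2 := sqrt_pos.2 two_pos
  calc weightedCost ρ ≤ ρ / √2 + √(2 * (1 - ρ)) / √2 := by
        rw [weightedCost, ← add_div]
        exact div_le_div_of_nonneg_right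
          (add_le_add_right (sqrt_one_sub_sq_le_sqrt_two_mul_one_sub ρ) ρ) hsqrt2.le
    _ < 1 / √2 + √(2 * (1 - ρ)) :=
        add_lt_add_of_lt_of_le (div_lt_div_of_pos_right hρ hsqrt2)
          (div_le_self (sqrt_nonneg _) one_lt_sqrt_two.le)

end TwoLevelMLMC

open TwoLevelMLMC in
/-- two-level comparison with `σ₀ = σ₁` and `M = 2`:
(a) `1/√2 + √(2(1−ρ)) < 1 ↔ ρ > 1/√2 + 1/4`; (b) for `ρ ∈ (1/√2, 1)`,
the weighted normalised cost `(ρ + √(1−ρ²))/√2` is strictly below both `1`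
and `1/√2 + √(2(1−ρ))`. -/
theorem two_level_comparison :
    (∀ ρ : ℝ, ρ ∈ Set.Icc (-1 : ℝ) 1 →
      (1 / Real.sqrt 2 + Real.sqrt (2 * (1 - ρ)) < 1 ↔
        ρ > 1 / Real.sqrt 2 + 1 / 4)) ∧
    (∀ ρ : ℝ, ρ ∈ Set.Ioo (1 / Real.sqrt 2) 1 →
      (ρ + Real.sqrt (1 - ρ ^ 2)) / Real.sqrt 2 <
        min 1 (1 / Real.sqrt 2 + Real.sqrt (2 * (1 - ρ)))) :=
  ⟨fun ρ _ => standardCost_lt_one_iff ρ,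
    fun _ hρ => lt_min (weightedCost_lt_one hρ.1 hρ.2.le) (weightedCost_lt_standardCost hρ.2)⟩
end

section
/- Fix d ≥ 1 and let θ assign to each pair (λ, κ) of multi-indices in ℕ^d with κ ∈ □⁻_λ a real weight θ^λ_κ. Define Θ^λ_ν for λ, ν ∈ ℕ^d by: Θ^λ_λ = 1; Θ^λ_ν = Σ_{κ ∈ □⁻_λ} θ^λ_κ · Θ^κ_ν if ν ≤ λ and ν ≠ λ; and Θ^λ_ν = 0 otherwise. Suppose p, y : ℕ^d → ℝ satisfy p(0) = y(0) and, for every λ ≠ 0, p(λ) = y(λ) + Σ_{ν ∈ □⁻_λ} θ^λ_ν · p(ν). Then for every λ ∈ ℕ^d: p(λ) = Σ_{ν ≤ λ} Θ^λ_ν · y(ν), the sum being over all multi-indices ν ≤ λ componentwise. -/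
/-!
Both sides of the expansion solve the same triangular linear recursion
`q λ = y λ + ∑_{κ ∈ □⁻_λ} θ λ κ · q κ`, whose solution is unique by well-founded induction.
For the right-hand side this is the recursion of `Θ` in its first index, after exchanging the
two sums: `Θ κ ν` vanishes unless `ν ≤ κ < λ`, so the term `ν = λ` contributes only `y λ`.
-/

open Finset

section LinearRecursion

variable {α R : Type*} [PartialOrder α] [Semiring R]

theorem eq_of_forall_eq_add_sum [WellFoundedLT α] {s : α → Finset α}
    (hs : ∀ lam, ∀ κ ∈ s lam, κ < lam) {θ : α → α → R} {y p q : α → R}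
    (hp : ∀ lam, p lam = y lam + ∑ κ ∈ s lam, θ lam κ * p κ)
    (hq : ∀ lam, q lam = y lam + ∑ κ ∈ s lam, θ lam κ * q κ) :
    p = q := by
  funext lam
  induction lam using WellFoundedLT.induction with
  | _ lam ih =>
    rw [hp, hq]
    congr 1
    exact sum_congr rfl fun κ hκ => by rw [ih κ (hs lam κ hκ)]

variable [LocallyFiniteOrderBot α] [DecidableEq α]

theorem sum_Iic_mul_eq_add_sum {s : α → Finset α} (hs : ∀ lam, ∀ κ ∈ s lam, κ < lam)
    {θ Θ : α → α → R} (hdiag : ∀ lam, Θ lam lam = 1)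
    (hrec : ∀ lam ν, ν < lam → Θ lam ν = ∑ κ ∈ s lam, θ lam κ * Θ κ ν)
    (hzero : ∀ lam ν, ¬ ν ≤ lam → Θ lam ν = 0) (y : α → R) (lam : α) :
    ∑ ν ∈ Iic lam, Θ lam ν * y ν =
      y lam + ∑ κ ∈ s lam, θ lam κ * ∑ ν ∈ Iic κ, Θ κ ν * y ν := by
  have hwiden : ∀ κ ∈ s lam,
      ∑ ν ∈ Iic κ, Θ κ ν * y ν = ∑ ν ∈ Iio lam, Θ κ ν * y ν := fun κ hκ =>
    sum_subset (fun ν hν => mem_Iio.mpr ((mem_Iic.mp hν).trans_lt (hs lam κ hκ)))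
      fun ν _ hν => by rw [hzero κ ν (by simpa using hν), zero_mul]
  rw [← Iio_insert, sum_insert notMem_Iio_self, hdiag, one_mul, sum_congr rfl fun κ hκ => congrArg (θ lam κ * ·) (hwiden κ hκ)]
  congr 1
  simp_rw [mul_sum, ← mul_assoc]
  rw [sum_comm]
  exact sum_congr rfl fun ν hν => by rw [hrec lam ν (mem_Iio.mp hν), sum_mul]

end LinearRecursion

theorem wmimc_expansion_general
    (d : ℕ)
    (θ Θ : (Fin d → ℕ) → (Fin d → ℕ) → ℝ)
    (hΘdiag : ∀ lam : Fin d → ℕ, Θ lam lam = 1)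
    (hΘrec : ∀ lam ν : Fin d → ℕ, ν ≤ lam → ν ≠ lam →
      Θ lam ν = ∑ κ ∈ (Finset.Iic lam).filter
          (fun l => l ≠ lam ∧ ∀ i, lam i - l i ≤ 1),
        θ lam κ * Θ κ ν)
    (hΘzero : ∀ lam ν : Fin d → ℕ, ¬ ν ≤ lam → Θ lam ν = 0)
    (p y : (Fin d → ℕ) → ℝ)
    (hp0 : p 0 = y 0)
    (hprec : ∀ lam : Fin d → ℕ, lam ≠ 0 →
      p lam = y lam + ∑ ν ∈ (Finset.Iic lam).filter
          (fun l => l ≠ lam ∧ ∀ i, lam i - l i ≤ 1),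
        θ lam ν * p ν) :
    ∀ lam : Fin d → ℕ, p lam = ∑ ν ∈ Finset.Iic lam, Θ lam ν * y ν := by
  set box := fun lam : Fin d → ℕ => (Iic lam).filter (fun l => l ≠ lam ∧ ∀ i, lam i - l i ≤ 1)
  have hbox : ∀ lam, ∀ κ ∈ box lam, κ < lam := fun lam κ hκ => by
    simp only [box, mem_filter, mem_Iic] at hκ
    exact lt_of_le_of_ne hκ.1 hκ.2.1
  have hbox_zero : box 0 = ∅ := eq_empty_of_forall_notMem fun κ hκ =>
    (hbox 0 κ hκ).not_ge (zero_le (a := κ))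
  have hp : ∀ lam, p lam = y lam + ∑ κ ∈ box lam, θ lam κ * p κ := fun lam => by
    rcases eq_or_ne lam 0 with rfl | hlam
    · rw [hbox_zero, sum_empty, add_zero, hp0]
    · exact hprec lam hlam
  have hexp := sum_Iic_mul_eq_add_sum hbox hΘdiag
    (fun lam ν hν => hΘrec lam ν hν.le hν.ne) hΘzero y
  exact congrFun (eq_of_forall_eq_add_sum hbox hp hexp)

/-- expansion of the weighted multi-index MLMC recursion.
With multi-indices in `ℕ^d`, local weights `θ`, cumulative weights `Θ`
defined by `Θ λ λ = 1`, `Θ λ ν = Σ_{κ ∈ □⁻_λ} θ λ κ · Θ κ ν` for `ν < λ`,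
and `Θ λ ν = 0` otherwise, any `p, y` satisfying `p 0 = y 0` and
`p λ = y λ + Σ_{ν ∈ □⁻_λ} θ λ ν · p ν` for `λ ≠ 0` expand as
`p λ = Σ_{ν ≤ λ} Θ λ ν · y ν`. -/
theorem wmimc_expansion
    (d : ℕ) (hd : 1 ≤ d)
    (θ Θ : (Fin d → ℕ) → (Fin d → ℕ) → ℝ)
    (hΘdiag : ∀ lam : Fin d → ℕ, Θ lam lam = 1)
    (hΘrec : ∀ lam ν : Fin d → ℕ, ν ≤ lam → ν ≠ lam →
      Θ lam ν = ∑ κ ∈ (Finset.Iic lam).filter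
          (fun l => l ≠ lam ∧ ∀ i, lam i - l i ≤ 1),
        θ lam κ * Θ κ ν)
    (hΘzero : ∀ lam ν : Fin d → ℕ, ¬ ν ≤ lam → Θ lam ν = 0)
    (p y : (Fin d → ℕ) → ℝ)
    (hp0 : p 0 = y 0)
    (hprec : ∀ lam : Fin d → ℕ, lam ≠ 0 →
      p lam = y lam + ∑ ν ∈ (Finset.Iic lam).filter
          (fun l => l ≠ lam ∧ ∀ i, lam i - l i ≤ 1),
        θ lam ν * p ν) :
    ∀ lam : Fin d → ℕ, p lam = ∑ ν ∈ Finset.Iic lam, Θ lam ν * y ν :=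
  wmimc_expansion_general d θ Θ hΘdiag hΘrec hΘzero p y hp0 hprec
end
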